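/- arXiv:0812.3527 — 3 statements merged into one kernel-verified Lean document; each statement's English description precedes it below -/
import Mathlib

section
/- Let G be an additive commutative group, H a subgroup of G, C a sub-semigroup of G which is open with respect to H, and x ∈ C. Let f and g be real-valued functions on C which are positively homogeneous, and suppose that: (1) f(a+b) ≥ f(a) + f(b) for all a, b ∈ C; (2) f(a) ≥ g(a) for all a ∈ C and f(x) = g(x); (3) g is differentiable at x for the directions in H. Then f is differentiable at x for the directions in H, and D_x f = D_x g; that is, for every w ∈ H the sequence (f(n•x+w) − f(n•x)), defined for n large enough, converges in ℝ to the limit of (g(n•x+w) − g(n•x)). -/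
open Filter

/-- criterion of differentiability. If `f` is positively homogeneous and
superadditive on a sub-semigroup `C` open with respect to the subgroup `H`, `f ≥ g` on `C`
with `f x = g x`, and `g` is differentiable at `x` for the directions in `H` (with
differential `Dg`, additive on `H`), then `f` is differentiable at `x` for the directions
in `H` and `D_x f = D_x g`. -/
theorem stmt_1 {G : Type*} [AddCommGroup G] (H : AddSubgroup G) (C : Set G)
    (hC_semigroup : ∀ a ∈ C, ∀ b ∈ C, a + b ∈ C)
    (hC_open : ∀ y ∈ C, ∀ w ∈ H, ∃ N : ℕ, 0 < N ∧ ∀ n : ℕ, N ≤ n → n • y + w ∈ C)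
    (x : G) (hx : x ∈ C)
    (f g : G → ℝ)
    (hf_hom : ∀ y ∈ C, ∀ n : ℕ, 0 < n → f (n • y) = n * f y)
    (hg_hom : ∀ y ∈ C, ∀ n : ℕ, 0 < n → g (n • y) = n * g y)
    (hf_super : ∀ a ∈ C, ∀ b ∈ C, f (a + b) ≥ f a + f b)
    (h_ge : ∀ a ∈ C, g a ≤ f a)
    (h_eq : f x = g x)
    (Dg : G → ℝ)
    (hg_diff : ∀ w ∈ H,
      Tendsto (fun n : ℕ => g (n • x + w) - g (n • x)) atTop (nhds (Dg w)))
    (hDg_add : ∀ u ∈ H, ∀ w ∈ H, Dg (u + w) = Dg u + Dg w) :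
    ∀ w ∈ H,
      Tendsto (fun n : ℕ => f (n • x + w) - f (n • x)) atTop (nhds (Dg w)) := by
  intro w hw
  obtain ⟨Nw, hNwpos, hNw⟩ := hC_open x hx w hw
  obtain ⟨Nw', hNw'pos, hNw'⟩ := hC_open x hx (-w) (neg_mem hw)
  -- Dg 0 = 0
  have hDg0 : Dg 0 = 0 := by
    have h1 := hg_diff 0 (zero_mem H)
    have h2 : Tendsto (fun n : ℕ => g (n • x + (0:G)) - g (n • x)) atTop (nhds 0) := by
      simpa using (tendsto_const_nhds : Tendsto (fun _ : ℕ => (0:ℝ)) atTop (nhds 0))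
    exact tendsto_nhds_unique h2 h1 |>.symm
  have hDgneg : Dg (-w) = -Dg w := by
    have h := hDg_add w hw (-w) (neg_mem hw)
    simp only [add_neg_cancel, hDg0] at h
    linarith
  -- membership of n • x in C for n ≥ 1
  have hmemC : ∀ n : ℕ, 0 < n → n • x ∈ C := by
    intro n hn
    induction n with
    | zero => omega
    | succ k ih =>
      rcases Nat.eq_zero_or_pos k with hk | hk
      · simpa [hk] using hx
      · have := hC_semigroup _ (ih hk) x hx
        simpa [succ_nsmul] using this
  -- lower bound
  have hlow : ∀ n : ℕ, max Nw 1 ≤ n →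
      g (n • x + w) - g (n • x) ≤ f (n • x + w) - f (n • x) := by
    intro n hn
    have hn1 : 0 < n := lt_of_lt_of_le one_pos (le_trans (le_max_right _ _) hn)
    have hmem : n • x + w ∈ C := hNw n (le_trans (le_max_left _ _) hn)
    have h1 : g (n • x + w) ≤ f (n • x + w) := h_ge _ hmem
    have h2 : f (n • x) = g (n • x) := by
      rw [hf_hom x hx n hn1, hg_hom x hx n hn1, h_eq]
    linarith
  -- upper bound
  have hup : ∀ n : ℕ, max Nw 1 ≤ n → ∀ m : ℕ, max Nw' 1 ≤ m →
      f (n • x + w) - f (n • x) ≤ g (m • x) - g (m • x + (-w)) := by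
    intro n hn m hm
    have hn1 : 0 < n := lt_of_lt_of_le one_pos (le_trans (le_max_right _ _) hn)
    have hm1 : 0 < m := lt_of_lt_of_le one_pos (le_trans (le_max_right _ _) hm)
    have hmemn : n • x + w ∈ C := hNw n (le_trans (le_max_left _ _) hn)
    have hmemm : m • x + (-w) ∈ C := hNw' m (le_trans (le_max_left _ _) hm)
    have hsum : (n • x + w) + (m • x + (-w)) = (n + m) • x := by
      rw [add_nsmul]; abel
    have h1 : f (n • x + w) + f (m • x + (-w)) ≤ f ((n + m) • x) := by
      rw [← hsum]; exact hf_super _ hmemn _ hmemm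
    have h2 : f ((n + m) • x) = (n + m : ℕ) * f x := hf_hom x hx _ (by omega)
    have h3 : f (n • x) = n * f x := hf_hom x hx n hn1
    have h4 : g (m • x) = m * g x := hg_hom x hx m hm1
    have h5 : g (m • x + (-w)) ≤ f (m • x + (-w)) := h_ge _ hmemm
    have : f (n • x + w) - f (n • x) ≤ (m : ℝ) * f x - f (m • x + (-w)) := by
      push_cast at h2 ⊢
      linarith
    calc f (n • x + w) - f (n • x) ≤ (m : ℝ) * f x - f (m • x + (-w)) := this
      _ ≤ g (m • x) - g (m • x + (-w)) := by rw [h4, ← h_eq]; linarith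
  -- conclude via ε
  rw [Metric.tendsto_atTop]
  intro ε hε
  have hg1 := Metric.tendsto_atTop.mp (hg_diff w hw) ε hε
  obtain ⟨N1, hN1⟩ := hg1
  have hg2 := Metric.tendsto_atTop.mp (hg_diff (-w) (neg_mem hw)) ε hε
  obtain ⟨N2, hN2⟩ := hg2
  set m := max (max Nw' 1) N2 with hm
  have hmub := hN2 m (le_max_right _ _)
  refine ⟨max (max Nw 1) N1, fun n hn => ?_⟩
  have hna : max Nw 1 ≤ n := le_trans (le_max_left _ _) hn
  have hnb : N1 ≤ n := le_trans (le_max_right _ _) hn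
  have hl := hlow n hna
  have hu := hup n hna m (le_max_left _ _)
  have h1 := hN1 n hnb
  rw [Real.dist_eq] at h1 hmub ⊢
  rw [abs_lt] at h1 hmub ⊢
  rw [hDgneg] at hmub
  constructor <;> [linarith; linarith]
end

section
/- Let G be an additive commutative group, H a subgroup of G, C a sub-semigroup of G which is open with respect to H, and x ∈ C. Let f be a real-valued function on C which is positively homogeneous and superadditive (f(a+b) ≥ f(a) + f(b) for all a, b ∈ C). For w ∈ H define D(w) ∈ ℝ ∪ {+∞} as the limit of the eventually nondecreasing sequence n ↦ f(n•x + w) − n·f(x) (equivalently, its limsup as n → ∞, which never takes the value −∞). Then D(0) = 0 and D is superadditive on H: D(u + w) ≥ D(u) + D(w) for all u, w ∈ H. -/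
open Filter

/-- for `f` positively homogeneous and superadditive on a sub-semigroup `C`
open with respect to `H`, and `x ∈ C`, the function `D : H → ℝ ∪ {+∞}` defined by
`D w = limsup_n (f(n•x + w) − n·f(x))` (taken in the extended reals; it never equals `−∞`)
satisfies `D 0 = 0` and is superadditive on `H`. -/
theorem stmt_3 {G : Type*} [AddCommGroup G] (H : AddSubgroup G) (C : Set G)
    (hC_semigroup : ∀ a ∈ C, ∀ b ∈ C, a + b ∈ C)
    (hC_open : ∀ y ∈ C, ∀ w ∈ H, ∃ N : ℕ, 0 < N ∧ ∀ n : ℕ, N ≤ n → n • y + w ∈ C)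
    (x : G) (hx : x ∈ C)
    (f : G → ℝ)
    (hf_hom : ∀ y ∈ C, ∀ n : ℕ, 0 < n → f (n • y) = n * f y)
    (hf_super : ∀ a ∈ C, ∀ b ∈ C, f (a + b) ≥ f a + f b)
    (D : G → EReal)
    (hD : ∀ w : G, D w =
      Filter.limsup (fun n : ℕ => ((f (n • x + w) - (n : ℝ) * f x : ℝ) : EReal)) atTop) :
    D 0 = 0 ∧ (∀ w ∈ H, D w ≠ ⊥) ∧
      ∀ u ∈ H, ∀ w ∈ H, D (u + w) ≥ D u + D w := by
  -- key facts for each w ∈ H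
  have key : ∀ w ∈ H, ∃ N : ℕ, 0 < N ∧ (∀ n : ℕ, N ≤ n → n • x + w ∈ C) ∧
      Tendsto (fun n : ℕ => ((f (n • x + w) - (n : ℝ) * f x : ℝ) : EReal)) atTop (nhds (D w)) ∧
      (∀ n : ℕ, N ≤ n → ((f (n • x + w) - (n : ℝ) * f x : ℝ) : EReal) ≤ D w) := by
    intro w hw
    obtain ⟨N, hNpos, hmem⟩ := hC_open x hx w hw
    set u : ℕ → EReal := fun n : ℕ => ((f (n • x + w) - (n : ℝ) * f x : ℝ) : EReal) with hu
    have hmono : Monotone (fun k : ℕ => u (k + N)) := by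
      apply monotone_nat_of_le_succ
      intro k
      have hky : (k + N) • x + w ∈ C := hmem (k + N) (Nat.le_add_left N k)
      have heq : (k + 1 + N) • x + w = x + ((k + N) • x + w) := by
        rw [show k + 1 + N = (k + N) + 1 by ring, succ_nsmul]
        abel
      have hsup := hf_super x hx _ hky
      rw [← heq] at hsup
      simp only [hu, EReal.coe_le_coe_iff]
      push_cast
      linarith
    have htend0 : Tendsto (fun k : ℕ => u (k + N)) atTop (nhds (⨆ k, u (k + N))) :=
      tendsto_atTop_iSup hmono
    have hDw : D w = ⨆ k, u (k + N) := by
      rw [hD w, ← limsup_nat_add (fun n => u n) N]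
      exact htend0.limsup_eq
    refine ⟨N, hNpos, hmem, ?_, ?_⟩
    · rw [hDw.symm] at htend0
      exact (tendsto_add_atTop_iff_nat N).mp htend0
    · intro n hn
      have : u n = u ((n - N) + N) := by rw [Nat.sub_add_cancel hn]
      show u n ≤ D w
      rw [this, hDw]
      exact le_iSup (fun k => u (k + N)) (n - N)
  -- D 0 = 0
  have hD0 : D 0 = 0 := by
    obtain ⟨N, hNpos, hmem, htend, _⟩ := key 0 H.zero_mem
    have hev : (fun n : ℕ => ((f (n • x + 0) - (n : ℝ) * f x : ℝ) : EReal)) =ᶠ[atTop]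
        (fun _ => (0 : EReal)) := by
      filter_upwards [eventually_ge_atTop N] with n hn
      have hnpos : 0 < n := lt_of_lt_of_le hNpos hn
      rw [add_zero, hf_hom x hx n hnpos]
      simp
    have := (tendsto_congr' hev).mp htend
    exact tendsto_nhds_unique this tendsto_const_nhds
  have hbot : ∀ w ∈ H, D w ≠ ⊥ := by
    intro w hw
    obtain ⟨N, hNpos, hmem, htend, hle⟩ := key w hw
    exact ((EReal.bot_lt_coe _).trans_le (hle N le_rfl)).ne'
  refine ⟨hD0, hbot, ?_⟩
  intro u hu w hw
  obtain ⟨Nu, hNu, hmemu, htendu, _⟩ := key u hu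
  obtain ⟨Nw, hNw, hmemw, htendw, _⟩ := key w hw
  obtain ⟨Ns, hNs, hmems, htends, hles⟩ := key (u + w) (H.add_mem hu hw)
  -- sum tendsto
  have hub : D u ≠ ⊥ := hbot u hu
  have hwb : D w ≠ ⊥ := hbot w hw
  have hcont : ContinuousAt (fun p : EReal × EReal => p.1 + p.2) (D u, D w) :=
    EReal.continuousAt_add (Or.inr hwb) (Or.inl hub)
  have htsum : Tendsto (fun m : ℕ =>
      ((f (m • x + u) - (m : ℝ) * f x : ℝ) : EReal) +
      ((f (m • x + w) - (m : ℝ) * f x : ℝ) : EReal)) atTop (nhds (D u + D w)) :=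
    hcont.tendsto.comp (htendu.prodMk_nhds htendw)
  refine le_of_tendsto htsum ?_
  filter_upwards [eventually_ge_atTop (max Nu (max Nw Ns))] with m hm
  have hmu : Nu ≤ m := le_trans (le_max_left _ _) hm
  have hmw : Nw ≤ m := le_trans (le_max_right _ _ |>.trans' (le_max_left _ _)) hm
  have hms : Ns ≤ m := le_trans (le_max_right _ _ |>.trans' (le_max_right _ _)) hm
  have heq : (2 * m) • x + (u + w) = (m • x + u) + (m • x + w) := by
    rw [two_mul, add_nsmul]; abel
  have hsup := hf_super _ (hmemu m hmu) _ (hmemw m hmw)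
  rw [← heq] at hsup
  have hreal : f (m • x + u) - (m : ℝ) * f x + (f (m • x + w) - (m : ℝ) * f x)
      ≤ f ((2 * m) • x + (u + w)) - ((2 * m : ℕ) : ℝ) * f x := by
    push_cast
    linarith
  calc ((f (m • x + u) - (m : ℝ) * f x : ℝ) : EReal) +
      ((f (m • x + w) - (m : ℝ) * f x : ℝ) : EReal)
      = ((f (m • x + u) - (m : ℝ) * f x + (f (m • x + w) - (m : ℝ) * f x) : ℝ) : EReal) := by
        rw [EReal.coe_add]
    _ ≤ ((f ((2 * m) • x + (u + w)) - ((2 * m : ℕ) : ℝ) * f x : ℝ) : EReal) :=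
        EReal.coe_le_coe_iff.mpr hreal
    _ ≤ D (u + w) := hles (2 * m) (le_trans hms (by omega))
end

section
/- Let V be an additive subgroup of the group of all functions ℕ → ℝ (under pointwise addition) such that every u ∈ V is a bounded sequence, and let a : ℕ → ℝ be a sequence converging in ℝ. Then the following are equivalent: (1) every u ∈ V converges in ℝ; (2) for every u ∈ V, the limit D(u) := lim_{m→∞} [ liminf_{n→∞}( m·a_n + u_n ) − liminf_{n→∞}( m·a_n ) ] exists in ℝ, and the resulting map D : V → ℝ is additive: D(u+v) = D(u) + D(v) for all u, v ∈ V. -/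
open Filter

/-- liminf of (convergent + bounded) splits. -/
lemma aux_liminf_add (c u : ℕ → ℝ) (C : ℝ) (hc : Tendsto c atTop (nhds C))
    (hbl : IsBoundedUnder (· ≥ ·) atTop u) (hbu : IsBoundedUnder (· ≤ ·) atTop u) :
    liminf (fun n => c n + u n) atTop = C + liminf u atTop := by
  have h1 : liminf c atTop + liminf u atTop ≤ liminf (fun n => c n + u n) atTop :=
    le_liminf_add hc.isBoundedUnder_ge hc.isBoundedUnder_le hbl hbu.isCoboundedUnder_ge
  have h2 : liminf (fun n => c n + u n) atTop ≤ limsup c atTop + liminf u atTop :=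
    liminf_add_le hc.isBoundedUnder_ge hc.isBoundedUnder_le hbl hbu.isCoboundedUnder_ge
  rw [hc.liminf_eq] at h1
  rw [hc.limsup_eq] at h2
  linarith

/-- let `V` be a subgroup of the group of real sequences all of whose
elements are bounded, and `a : ℕ → ℝ` a convergent sequence. Then every element of
`V` converges iff for every `u ∈ V` the limit
`D u = lim_m [liminf_n (m·aₙ + uₙ) − liminf_n (m·aₙ)]` exists in `ℝ` and `D` is
additive on `V`. -/
theorem stmt_10 (V : AddSubgroup (ℕ → ℝ))
    (h_bdd : ∀ u ∈ V, ∃ M : ℝ, ∀ n : ℕ, |u n| ≤ M)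
    (a : ℕ → ℝ) (A : ℝ) (ha : Tendsto a atTop (nhds A)) :
    (∀ u ∈ V, ∃ L : ℝ, Tendsto u atTop (nhds L)) ↔
    (∃ D : (ℕ → ℝ) → ℝ,
        (∀ u ∈ V,
          Tendsto (fun m : ℕ =>
              liminf (fun n : ℕ => (m : ℝ) * a n + u n) atTop -
                liminf (fun n : ℕ => (m : ℝ) * a n) atTop)
            atTop (nhds (D u))) ∧
        ∀ u ∈ V, ∀ v ∈ V, D (u + v) = D u + D v) := by
  have hbl : ∀ u ∈ V, IsBoundedUnder (· ≥ ·) atTop u := by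
    intro u hu
    obtain ⟨M, hM⟩ := h_bdd u hu
    exact isBoundedUnder_of ⟨-M, fun n => neg_le_of_abs_le (hM n)⟩
  have hbu : ∀ u ∈ V, IsBoundedUnder (· ≤ ·) atTop u := by
    intro u hu
    obtain ⟨M, hM⟩ := h_bdd u hu
    exact isBoundedUnder_of ⟨M, fun n => le_of_abs_le (hM n)⟩
  -- the expression is constantly `liminf u`
  have key : ∀ u ∈ V, ∀ m : ℕ,
      liminf (fun n : ℕ => (m : ℝ) * a n + u n) atTop -
        liminf (fun n : ℕ => (m : ℝ) * a n) atTop = liminf u atTop := by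
    intro u hu m
    have hc : Tendsto (fun n => (m : ℝ) * a n) atTop (nhds ((m : ℝ) * A)) :=
      ha.const_mul _
    rw [aux_liminf_add _ u _ hc (hbl u hu) (hbu u hu), hc.liminf_eq]
    ring
  have key' : ∀ u ∈ V,
      Tendsto (fun m : ℕ =>
          liminf (fun n : ℕ => (m : ℝ) * a n + u n) atTop -
            liminf (fun n : ℕ => (m : ℝ) * a n) atTop)
        atTop (nhds (liminf u atTop)) := by
    intro u hu
    have : (fun m : ℕ =>
        liminf (fun n : ℕ => (m : ℝ) * a n + u n) atTop -
          liminf (fun n : ℕ => (m : ℝ) * a n) atTop) = fun _ => liminf u atTop :=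
      funext fun m => key u hu m
    rw [this]
    exact tendsto_const_nhds
  constructor
  · intro h
    refine ⟨fun u => liminf u atTop, fun u hu => key' u hu, ?_⟩
    intro u hu v hv
    obtain ⟨L, hL⟩ := h u hu
    obtain ⟨L', hL'⟩ := h v hv
    have huv : Tendsto (u + v) atTop (nhds (L + L')) := hL.add hL'
    show liminf (u + v) atTop = liminf u atTop + liminf v atTop
    rw [huv.liminf_eq, hL.liminf_eq, hL'.liminf_eq]
  · rintro ⟨D, hD, hAdd⟩ u hu
    have hDeq : ∀ v ∈ V, D v = liminf v atTop := fun v hv =>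
      tendsto_nhds_unique (hD v hv) (key' v hv)
    have hneg : D (-u) = -limsup u atTop := by
      rw [hDeq (-u) (neg_mem hu)]
      have h := Antitone.map_limsup_of_continuousAt (F := atTop)
        (f := fun x : ℝ => -x) (fun _ _ h => neg_le_neg h) u
        (continuous_neg.continuousAt) (hbu u hu) (hbl u hu).isCoboundedUnder_le
      exact h.symm
    have h0 : D (u + -u) = D u + D (-u) := hAdd u hu (-u) (neg_mem hu)
    have hz : u + -u = (0 : ℕ → ℝ) := by simp
    rw [hz, hDeq 0 (zero_mem V), hDeq u hu, hneg] at h0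
    have hl0 : liminf (0 : ℕ → ℝ) atTop = 0 := liminf_const 0
    rw [hl0] at h0
    have heq : liminf u atTop = limsup u atTop := by linarith
    refine ⟨liminf u atTop, tendsto_of_liminf_eq_limsup rfl heq.symm (hbu u hu) (hbl u hu)⟩
end
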